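/- Let X and Y be locally compact, connected Hausdorff spaces, ρ a quasi-integral on C_c(X) with corresponding topological measure μ, and η a quasi-integral on C_c(Y) with corresponding topological measure ν. If μ and ν are both almost simple but neither is a measure (i.e., neither is subadditive; equivalently neither extends to a Borel measure), then η × ρ ≠ ρ × η as functionals on C_c(X × Y). -/

import Mathlib

open scoped ENNReal CompactlySupported
open CompactlySupportedContinuousMap

namespace QLF

variable {X Y : Type*}

/-- Membership in the singly generated subalgebra `B(f)`:
`g ∈ B(f)` iff `g = φ ∘ f` for some continuous `φ` with `φ 0 = 0`. -/
def InB [TopologicalSpace X] (f g : C_c(X, ℝ)) : Prop :=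
  ∃ φ : C(ℝ, ℝ), φ 0 = 0 ∧ ∀ x, g x = φ (f x)

/-- A quasi-integral (quasi-linear functional) on `C_c(X)`. -/
structure IsQuasiIntegral [TopologicalSpace X] (ρ : C_c(X, ℝ) → ℝ) : Prop where
  smul : ∀ (a : ℝ) (f : C_c(X, ℝ)), ρ (a • f) = a * ρ f
  add : ∀ f g h : C_c(X, ℝ), InB f g → InB f h → ρ (g + h) = ρ g + ρ h
  pos : ∀ f : C_c(X, ℝ), (∀ x, 0 ≤ f x) → 0 ≤ ρ f

/-- The value of the topological measure corresponding to `ρ` on an open set. -/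
noncomputable def qiOpen [TopologicalSpace X] (ρ : C_c(X, ℝ) → ℝ) (U : Set X) : ℝ≥0∞ :=
  ⨆ (f : C_c(X, ℝ)) (_ : (∀ x, 0 ≤ f x ∧ f x ≤ 1) ∧ tsupport f ⊆ U), ENNReal.ofReal (ρ f)

open Classical in
/-- The topological measure corresponding to a quasi-integral `ρ`:
on open sets given by `qiOpen`, on other (closed) sets by outer regularity. -/
noncomputable def qiMeas [TopologicalSpace X] (ρ : C_c(X, ℝ) → ℝ) (A : Set X) : ℝ≥0∞ :=
  if IsOpen A then qiOpen ρ A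
  else ⨅ (U : Set X) (_ : IsOpen U ∧ A ⊆ U), qiOpen ρ U

/-- A topological measure on `X` (as a set function on all sets; only its values on
open and closed sets are constrained/meaningful). -/
def IsTopMeasure [TopologicalSpace X] (μ : Set X → ℝ≥0∞) : Prop :=
  (∀ A B : Set X, Disjoint A B → (IsCompact A ∨ IsOpen A) → (IsCompact B ∨ IsOpen B) →
      (IsCompact (A ∪ B) ∨ IsOpen (A ∪ B)) → μ (A ∪ B) = μ A + μ B) ∧
  (∀ U : Set X, IsOpen U → μ U = ⨆ (K : Set X) (_ : IsCompact K ∧ K ⊆ U), μ K) ∧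
  (∀ F : Set X, IsClosed F → μ F = ⨅ (U : Set X) (_ : IsOpen U ∧ F ⊆ U), μ U)

/-- A simple topological measure: assumes only the values 0 and 1 on open and closed sets. -/
def IsSimpleTM [TopologicalSpace X] (μ : Set X → ℝ≥0∞) : Prop :=
  IsTopMeasure μ ∧ ∀ A : Set X, IsOpen A ∨ IsClosed A → μ A = 0 ∨ μ A = 1

/-- A simple quasi-integral: its corresponding topological measure assumes only 0 and 1. -/
def IsSimpleQI [TopologicalSpace X] (ρ : C_c(X, ℝ) → ℝ) : Prop :=
  ∀ A : Set X, IsOpen A ∨ IsClosed A → qiMeas ρ A = 0 ∨ qiMeas ρ A = 1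

/-- An almost simple quasi-integral: its corresponding topological measure is a positive
scalar multiple of a simple topological measure. -/
def IsAlmostSimpleQI [TopologicalSpace X] (ρ : C_c(X, ℝ) → ℝ) : Prop :=
  ∃ (c : ℝ≥0∞) (μ' : Set X → ℝ≥0∞), 0 < c ∧ c ≠ ∞ ∧ IsSimpleTM μ' ∧
    ∀ A : Set X, IsOpen A ∨ IsClosed A → qiMeas ρ A = c * μ' A

/-- The composition `φ ∘ f` as an element of `C_c(X, ℝ)`, for continuous `φ` with `φ 0 = 0`. -/
noncomputable def compCc [TopologicalSpace X] (φ : C(ℝ, ℝ)) (hφ : φ 0 = 0)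
    (f : C_c(X, ℝ)) : C_c(X, ℝ) :=
  ⟨⟨fun x => φ (f x), φ.continuous.comp f.continuous⟩, f.hasCompactSupport'.comp_left hφ⟩

section Products

variable [TopologicalSpace X] [TopologicalSpace Y]

/-- The section `f_y ∈ C_c(X)` of `f ∈ C_c(X × Y)`, `f_y (x) = f (x, y)`. -/
noncomputable def fiberY [T2Space X] (f : C_c(X × Y, ℝ)) (y : Y) : C_c(X, ℝ) :=
  ⟨⟨fun x => f (x, y), f.continuous.comp (continuous_id.prodMk continuous_const)⟩,
    HasCompactSupport.intro (f.hasCompactSupport'.image continuous_fst)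
      (fun x hx => by
        by_contra h
        exact hx ⟨(x, y), subset_tsupport _ h, rfl⟩)⟩

/-- The section `f_x ∈ C_c(Y)` of `f ∈ C_c(X × Y)`, `f_x (y) = f (x, y)`. -/
noncomputable def fiberX [T2Space Y] (f : C_c(X × Y, ℝ)) (x : X) : C_c(Y, ℝ) :=
  ⟨⟨fun y => f (x, y), f.continuous.comp (continuous_const.prodMk continuous_id)⟩,
    HasCompactSupport.intro (f.hasCompactSupport'.image continuous_snd)
      (fun y hy => by
        by_contra h
        exact hy ⟨(x, y), subset_tsupport _ h, rfl⟩)⟩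

/-- `T_ρ(f) (y) = ρ (f_y)` as a bare function on `Y`. -/
noncomputable def Tmap [T2Space X] (ρ : C_c(X, ℝ) → ℝ) (f : C_c(X × Y, ℝ)) : Y → ℝ :=
  fun y => ρ (fiberY f y)

/-- `S_η(f) (x) = η (f_x)` as a bare function on `X`. -/
noncomputable def Smap [T2Space Y] (η : C_c(Y, ℝ) → ℝ) (f : C_c(X × Y, ℝ)) : X → ℝ :=
  fun x => η (fiberX f x)

open Classical in
/-- `T_ρ(f)` as an element of `C_c(Y, ℝ)` (when `ρ` is a quasi-integral, `T_ρ(f)` is indeed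
continuous with compact support, and this definition takes the first branch). -/
noncomputable def TCc [T2Space X] (ρ : C_c(X, ℝ) → ℝ) (f : C_c(X × Y, ℝ)) : C_c(Y, ℝ) :=
  if h : Continuous (Tmap ρ f) ∧ HasCompactSupport (Tmap ρ f)
  then ⟨⟨Tmap ρ f, h.1⟩, h.2⟩ else 0

open Classical in
/-- `S_η(f)` as an element of `C_c(X, ℝ)`. -/
noncomputable def SCc [T2Space Y] (η : C_c(Y, ℝ) → ℝ) (f : C_c(X × Y, ℝ)) : C_c(X, ℝ) :=
  if h : Continuous (Smap η f) ∧ HasCompactSupport (Smap η f)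
  then ⟨⟨Smap η f, h.1⟩, h.2⟩ else 0

/-- The repeated quasi-integral `(η × ρ) (f) = η (T_ρ (f))`. -/
noncomputable def prodQI [T2Space X] (η : C_c(Y, ℝ) → ℝ) (ρ : C_c(X, ℝ) → ℝ) :
    C_c(X × Y, ℝ) → ℝ := fun f => η (TCc ρ f)

/-- The repeated quasi-integral `(ρ × η) (f) = ρ (S_η (f))`. -/
noncomputable def prodQI' [T2Space Y] (ρ : C_c(X, ℝ) → ℝ) (η : C_c(Y, ℝ) → ℝ) :
    C_c(X × Y, ℝ) → ℝ := fun f => ρ (SCc η f)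

/-- The tensor product `(g ⊗ h) (x, y) = g (x) * h (y)` as an element of `C_c(X × Y, ℝ)`. -/
noncomputable def tensor (g : C_c(X, ℝ)) (h : C_c(Y, ℝ)) : C_c(X × Y, ℝ) :=
  ⟨⟨fun p => g p.1 * h p.2,
      (g.continuous.comp continuous_fst).mul (h.continuous.comp continuous_snd)⟩,
    HasCompactSupport.intro' (g.hasCompactSupport'.prod h.hasCompactSupport')
      ((isClosed_tsupport _).prod (isClosed_tsupport _))
      (fun p hp => by
        rcases not_and_or.mp (by simpa [Set.mem_prod] using hp) with h1 | h1
        · simp [image_eq_zero_of_notMem_tsupport h1]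
        · simp [image_eq_zero_of_notMem_tsupport h1])⟩

end Products

/-- A topological measure is subadditive (equivalently, extends to a Borel measure). -/
def IsSubadditiveOnOpens [TopologicalSpace X] (μ : Set X → ℝ≥0∞) : Prop :=
  ∀ U V : Set X, IsOpen U → IsOpen V → μ (U ∪ V) ≤ μ U + μ V

/-- `μ` is a positive scalar multiple of a point mass `δ_{x₀}` (on open and closed sets). -/
def IsPointMassMultiple [TopologicalSpace X] (μ : Set X → ℝ≥0∞) : Prop :=
  ∃ (c : ℝ≥0∞) (x₀ : X), 0 < c ∧ c ≠ ∞ ∧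
    ∀ A : Set X, IsOpen A ∨ IsClosed A →
      μ A = c * A.indicator (fun _ => (1 : ℝ≥0∞)) x₀

end QLF

/-!
Write `μ = c • μ'` and `ν = d • ν'` with `μ'`, `ν'` simple. A failure of subadditivity gives
`ν`-null open sets `V₁`, `V₂` whose union contains a compact set `L` of full `ν`-mass, and on `X`
a `μ`-null open set `U` together with compact sets `K₁`, `K₂` of full `μ`-mass with
`K₁ ∩ K₂ ⊆ U`. Take Urysohn plateaus `Φᵢ = 1` near `Kᵢ` whose supports overlap only inside `U`,
a partition `h₁ + h₂ = 1` on `L` with `supp hᵢ ⊆ Vᵢ`, and `F = Φ₁ ⊗ h₁ + Φ₂ ⊗ h₂`.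

A simple quasi-integral only sees the essential supremum of a function, so
`T_ρ F = c • (h₁ ⊔ h₂)`, which is at least `c / 2` on `L`: hence `(η × ρ) F > 0`. On the other
side `η (F_x) = 0` unless both `Φ₁ x` and `Φ₂ x` are nonzero, so `S_η F` is supported in the null
set `U` and `(ρ × η) F = 0`.
-/

namespace QLF

open Set Function

section QuasiIntegral

variable {Z : Type*} [TopologicalSpace Z] {ρ : C_c(Z, ℝ) → ℝ}

theorem IsQuasiIntegral.map_zero (hρ : IsQuasiIntegral ρ) : ρ 0 = 0 := by
  simpa using hρ.smul 0 0

theorem qiMeas_of_isOpen {U : Set Z} (hU : IsOpen U) : qiMeas ρ U = qiOpen ρ U := if_pos hU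

theorem qiMeas_mono {U V : Set Z} (hU : IsOpen U) (hV : IsOpen V) (h : U ⊆ V) :
    qiMeas ρ U ≤ qiMeas ρ V := by
  rw [qiMeas_of_isOpen hU, qiMeas_of_isOpen hV]
  exact iSup_mono fun f => iSup_mono' fun hf => ⟨⟨hf.1, hf.2.trans h⟩, le_rfl⟩

theorem qiMeas_eq_zero_of_subset {U V : Set Z} (hU : IsOpen U) (hV : IsOpen V) (h : U ⊆ V)
    (hV0 : qiMeas ρ V = 0) : qiMeas ρ U = 0 :=
  nonpos_iff_eq_zero.1 (hV0 ▸ qiMeas_mono hU hV h)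

theorem ofReal_le_qiMeas {U : Set Z} (hU : IsOpen U) {f : C_c(Z, ℝ)}
    (hf : ∀ x, 0 ≤ f x ∧ f x ≤ 1) (hsupp : tsupport f ⊆ U) :
    ENNReal.ofReal (ρ f) ≤ qiMeas ρ U := by
  rw [qiMeas_of_isOpen hU]
  exact le_iSup₂_of_le f ⟨hf, hsupp⟩ le_rfl

theorem inB_compCc (φ : C(ℝ, ℝ)) (hφ : φ 0 = 0) (f : C_c(Z, ℝ)) : InB f (compCc φ hφ f) :=
  ⟨φ, hφ, fun _ => rfl⟩

theorem IsQuasiIntegral.le_mul_toReal_qiMeas (hρ : IsQuasiIntegral ρ) {U : Set Z}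
    (hU : IsOpen U) (hfin : qiMeas ρ U ≠ ∞) {f : C_c(Z, ℝ)} {M : ℝ} (hM : 0 < M)
    (hf0 : ∀ x, 0 ≤ f x) (hfM : ∀ x, f x ≤ M) (hsupp : tsupport f ⊆ U) :
    ρ f ≤ M * (qiMeas ρ U).toReal := by
  have hsupp' : tsupport (M⁻¹ • f) ⊆ U := by
    rw [coe_smul]
    exact (tsupport_smul_subset_right (fun _ => M⁻¹) f).trans hsupp
  have hscaled : ENNReal.ofReal (ρ (M⁻¹ • f)) ≤ qiMeas ρ U := by
    refine ofReal_le_qiMeas hU (fun x => ?_) hsupp'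
    rw [CompactlySupportedContinuousMap.smul_apply, smul_eq_mul, inv_mul_le_iff₀ hM, mul_one]
    exact ⟨mul_nonneg (inv_nonneg.2 hM.le) (hf0 x), hfM x⟩
  rw [ENNReal.ofReal_le_iff_le_toReal hfin, hρ.smul, inv_mul_le_iff₀ hM] at hscaled
  exact hscaled

theorem IsQuasiIntegral.eq_zero_of_tsupport_subset (hρ : IsQuasiIntegral ρ) {U : Set Z}
    (hU : IsOpen U) (hU0 : qiMeas ρ U = 0) {f : C_c(Z, ℝ)} (hf0 : ∀ x, 0 ≤ f x)
    (hsupp : tsupport f ⊆ U) : ρ f = 0 := by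
  obtain ⟨M, hM⟩ := f.continuous.bddAbove_range_of_hasCompactSupport f.hasCompactSupport
  have hle := hρ.le_mul_toReal_qiMeas hU (by simp [hU0]) (lt_max_of_lt_right one_pos) hf0
    (fun x => (hM ⟨x, rfl⟩).trans (le_max_left M 1)) hsupp
  rw [hU0, ENNReal.toReal_zero, mul_zero] at hle
  exact le_antisymm hle (hρ.pos f hf0)

theorem IsQuasiIntegral.mono_of_inB (hρ : IsQuasiIntegral ρ) {w g h : C_c(Z, ℝ)}
    (hg : InB w g) (hh : InB w h) (hle : ∀ x, g x ≤ h x) : ρ g ≤ ρ h := by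
  obtain ⟨φ, hφ0, hφ⟩ := hg
  obtain ⟨ψ, hψ0, hψ⟩ := hh
  have hdiff : InB w (h - g) := ⟨ψ - φ, by simp [hφ0, hψ0], fun x => by simp [hφ, hψ]⟩
  have hadd := hρ.add w g (h - g) ⟨φ, hφ0, hφ⟩ hdiff
  rw [add_sub_cancel] at hadd
  linarith [hρ.pos (h - g) fun x => by simpa using hle x]

theorem IsQuasiIntegral.le_of_le_on_support (hρ : IsQuasiIntegral ρ) {f k : C_c(Z, ℝ)} {c : ℝ}
    (hc : 0 ≤ c) (hf0 : ∀ x, 0 ≤ f x) (hk0 : ∀ x, 0 ≤ k x) (hkc : ∀ x, k x ≤ c)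
    (hfk : ∀ x, k x ≠ 0 → c ≤ f x) : ρ k ≤ ρ f := by
  set m := compCc ⟨fun s => min s c, by fun_prop⟩ (min_eq_left hc) f
  have hm : ∀ x, m x = min (f x) c := fun _ => rfl
  have hmc : ∀ x, k x ≠ 0 → m x = c := fun x hx => by rw [hm, min_eq_right (hfk x hx)]
  have hmf : ρ m ≤ ρ f := hρ.mono_of_inB (inB_compCc _ _ f)
    ⟨ContinuousMap.id ℝ, rfl, fun _ => rfl⟩ fun x => min_le_left _ _
  -- on `w = m + k`, `k` is the part of `w` above the level `c`, and `m` is `w` capped at `c`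
  have hkm : ρ k ≤ ρ m := by
    refine hρ.mono_of_inB (w := m + k)
      ⟨⟨fun s => min (max (s - c) 0) c, by fun_prop⟩, by simp [hc], fun x => ?_⟩
      ⟨⟨fun s => min s c, by fun_prop⟩, min_eq_left hc, fun x => ?_⟩ fun x => ?_ <;>
    by_cases hx : k x = 0 <;>
    simp [hx, hmc, hk0, hkc, hc, hf0, (min_le_right _ _ : min (f x) c ≤ c), hm]
  exact hkm.trans hmf

theorem IsQuasiIntegral.mul_toReal_qiMeas_le (hρ : IsQuasiIntegral ρ) {W : Set Z}
    (hW : IsOpen W) {f : C_c(Z, ℝ)} {t : ℝ} (ht : 0 ≤ t)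
    (hf0 : ∀ x, 0 ≤ f x) (hfW : ∀ x ∈ W, t ≤ f x) : t * (qiMeas ρ W).toReal ≤ ρ f := by
  rcases ht.eq_or_lt with rfl | ht
  · simpa using hρ.pos f hf0
  have hbump : ∀ k : C_c(Z, ℝ), (∀ x, 0 ≤ k x ∧ k x ≤ 1) → tsupport k ⊆ W → t * ρ k ≤ ρ f := by
    intro k hk hkW
    rw [← hρ.smul]
    exact hρ.le_of_le_on_support ht.le hf0 (fun x => mul_nonneg ht.le (hk x).1)
      (fun x => mul_le_of_le_one_right ht.le (hk x).2)
      fun x hx => hfW x (hkW (subset_tsupport k (right_ne_zero_of_mul hx)))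
  have hW_le : qiMeas ρ W ≤ ENNReal.ofReal (ρ f / t) := by
    rw [qiMeas_of_isOpen hW]
    exact iSup₂_le fun k hk =>
      ENNReal.ofReal_le_ofReal ((le_div_iff₀' ht).2 (hbump k hk.1 hk.2))
  rw [← le_div_iff₀' ht]
  exact ENNReal.toReal_le_of_le_ofReal (div_nonneg (hρ.pos f hf0) ht.le) hW_le

theorem IsQuasiIntegral.le_mul_toReal_qiMeas_univ (hρ : IsQuasiIntegral ρ)
    (hfin : qiMeas ρ univ ≠ ∞) {f : C_c(Z, ℝ)} {t : ℝ} (ht : 0 ≤ t) (hf0 : ∀ x, 0 ≤ f x)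
    (hlevel : ∀ s, t < s → qiMeas ρ {x | s < f x} = 0) :
    ρ f ≤ t * (qiMeas ρ univ).toReal := by
  have hbound : ∀ c ∈ Ioi t, ρ f ≤ c * (qiMeas ρ univ).toReal := by
    intro c (hc : t < c)
    have hc0 : 0 < c := ht.trans_lt hc
    set low := compCc ⟨fun s => min s c, by fun_prop⟩ (min_eq_left hc0.le) f
    set high := compCc ⟨fun s => max (s - c) 0, by fun_prop⟩ (by simp [hc0.le]) f
    have hsplit : ρ f = ρ low + ρ high := by
      have hf : f = low + high := by
        ext x
        show f x = min (f x) c + max (f x - c) 0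
        rcases le_total (f x) c with h | h <;> simp [h]
      calc ρ f = ρ (low + high) := congrArg ρ hf
        _ = ρ low + ρ high := hρ.add f low high (inB_compCc _ _ f) (inB_compCc _ _ f)
    have hlow : ρ low ≤ c * (qiMeas ρ univ).toReal :=
      hρ.le_mul_toReal_qiMeas isOpen_univ hfin hc0 (fun x => le_min (hf0 x) hc0.le)
        (fun x => min_le_right _ _) (subset_univ _)
    have hhigh : ρ high = 0 := by
      refine hρ.eq_zero_of_tsupport_subset (isOpen_lt continuous_const f.continuous)
        (hlevel ((t + c) / 2) (by linarith)) (fun x => le_max_right _ _) ?_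
      refine (closure_minimal (fun x hx => ?_) (isClosed_le continuous_const f.continuous)).trans
        fun x (hx : c ≤ f x) => show (t + c) / 2 < f x by linarith
      by_contra hlt
      exact hx (max_eq_right (sub_nonpos.2 (not_le.1 hlt).le))
    linarith
  exact ge_of_tendsto ((continuous_mul_const _).continuousWithinAt.tendsto)
    (eventually_nhdsWithin_of_forall hbound)

/-- Off the null set `U` one of the two bumps vanishes, so `ρ` sees only the larger
coefficient. -/
theorem IsQuasiIntegral.map_smul_add_smul_eq_max (hρ : IsQuasiIntegral ρ)
    (hfin : qiMeas ρ univ ≠ ∞) {U A₁ A₂ : Set Z} (hU : IsOpen U) (hU0 : qiMeas ρ U = 0)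
    (hA₁ : IsOpen A₁) (hA₂ : IsOpen A₂)
    (hA₁univ : qiMeas ρ A₁ = qiMeas ρ univ) (hA₂univ : qiMeas ρ A₂ = qiMeas ρ univ)
    {Φ₁ Φ₂ : C_c(Z, ℝ)} (hΦ₁ : ∀ x, Φ₁ x ∈ Icc 0 1) (hΦ₂ : ∀ x, Φ₂ x ∈ Icc 0 1)
    (hΦ₁A : EqOn Φ₁ 1 A₁) (hΦ₂A : EqOn Φ₂ 1 A₂) (hΦU : tsupport Φ₁ ∩ tsupport Φ₂ ⊆ U)
    {a b : ℝ} (ha : 0 ≤ a) (hb : 0 ≤ b) :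
    ρ (a • Φ₁ + b • Φ₂) = max a b * (qiMeas ρ univ).toReal := by
  set g := a • Φ₁ + b • Φ₂
  have hg : ∀ x, g x = a * Φ₁ x + b * Φ₂ x := fun x => rfl
  have hg0 : ∀ x, 0 ≤ g x := fun x => by
    rw [hg]
    exact add_nonneg (mul_nonneg ha (hΦ₁ x).1) (mul_nonneg hb (hΦ₂ x).1)
  refine le_antisymm ?_ ?_
  · refine hρ.le_mul_toReal_qiMeas_univ hfin (le_max_of_le_left ha) hg0 fun s hs =>
      qiMeas_eq_zero_of_subset (isOpen_lt continuous_const g.continuous) hU ?_ hU0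
    intro x (hx : s < g x)
    by_contra hxU
    have hΦ : Φ₁ x = 0 ∨ Φ₂ x = 0 := by
      by_contra! h
      exact hxU (hΦU ⟨subset_tsupport _ h.1, subset_tsupport _ h.2⟩)
    rcases hΦ with h | h <;> rw [hg, h] at hx
    · linarith [mul_le_of_le_one_right hb (hΦ₂ x).2, le_max_right a b]
    · linarith [mul_le_of_le_one_right ha (hΦ₁ x).2, le_max_left a b]
  · rcases le_total a b with hab | hab
    · rw [max_eq_right hab, ← hA₂univ]
      refine hρ.mul_toReal_qiMeas_le hA₂ hb hg0 fun x hx => ?_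
      rw [hg, hΦ₂A hx]
      simpa using mul_nonneg ha (hΦ₁ x).1
    · rw [max_eq_left hab, ← hA₁univ]
      refine hρ.mul_toReal_qiMeas_le hA₁ ha hg0 fun x hx => ?_
      rw [hg, hΦ₁A hx]
      simpa using mul_nonneg hb (hΦ₂ x).1

end QuasiIntegral

section SimpleTopMeasure

variable {Z : Type*} [TopologicalSpace Z] {μ : Set Z → ℝ≥0∞}

theorem IsSimpleTM.le_of_subset_isOpen (hμ : IsSimpleTM μ) {F U : Set Z} (hF : IsClosed F)
    (hU : IsOpen U) (h : F ⊆ U) : μ F ≤ μ U :=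
  hμ.1.2.2 F hF ▸ iInf₂_le U ⟨hU, h⟩

theorem IsSimpleTM.eq_one_of_subset_isOpen (hμ : IsSimpleTM μ) {F U : Set Z} (hF : IsClosed F)
    (hU : IsOpen U) (h : F ⊆ U) (hF1 : μ F = 1) : μ U = 1 :=
  (hμ.2 U (.inl hU)).resolve_left fun h0 => by
    simpa [hF1, h0] using hμ.le_of_subset_isOpen hF hU h

theorem IsSimpleTM.exists_isCompact_subset_eq_one [T2Space Z] (hμ : IsSimpleTM μ) {U : Set Z}
    (hU : IsOpen U) (hU1 : μ U = 1) : ∃ K ⊆ U, IsCompact K ∧ μ K = 1 := by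
  by_contra! h
  have : μ U ≤ 0 := hμ.1.2.1 U hU ▸ iSup₂_le fun K hK =>
    ((hμ.2 K (.inr hK.1.isClosed)).resolve_right (h K hK.2 hK.1)).le
  simp_all

theorem IsSimpleTM.exists_of_not_subadditive (hμ : IsSimpleTM μ)
    (h : ¬ IsSubadditiveOnOpens μ) :
    ∃ U₁ U₂ : Set Z, IsOpen U₁ ∧ IsOpen U₂ ∧ μ U₁ = 0 ∧ μ U₂ = 0 ∧ μ (U₁ ∪ U₂) = 1 := by
  simp only [IsSubadditiveOnOpens, not_forall, not_le] at h
  obtain ⟨U₁, U₂, hU₁, hU₂, hlt⟩ := h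
  refine ⟨U₁, U₂, hU₁, hU₂, ?_⟩
  rcases hμ.2 U₁ (.inl hU₁) with h₁ | h₁ <;> rcases hμ.2 U₂ (.inl hU₂) with h₂ | h₂ <;>
    rcases hμ.2 (U₁ ∪ U₂) (.inl (hU₁.union hU₂)) with h | h <;> simp_all [one_add_one_eq_two]

/-- `K₂` is found inside the complement of the null compact set `K₁ \ U₂`. -/
theorem IsSimpleTM.exists_isCompact_inter_subset [T2Space Z] (hμ : IsSimpleTM μ) {U₁ U₂ : Set Z}
    (hU₁ : IsOpen U₁) (hU₂ : IsOpen U₂) (hU₁0 : μ U₁ = 0) (hU1 : μ (U₁ ∪ U₂) = 1) :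
    ∃ K₁ K₂ : Set Z, IsCompact K₁ ∧ IsCompact K₂ ∧ K₁ ⊆ U₁ ∪ U₂ ∧ K₁ ∩ K₂ ⊆ U₂ ∧
      μ K₁ = 1 ∧ μ K₂ = 1 := by
  obtain ⟨K₁, hK₁U, hK₁, hK₁1⟩ := hμ.exists_isCompact_subset_eq_one (hU₁.union hU₂) hU1
  have hP : IsCompact (K₁ \ U₂) := hK₁.diff hU₂
  have hP0 : μ (K₁ \ U₂) = 0 := nonpos_iff_eq_zero.1 <| hU₁0 ▸
    hμ.le_of_subset_isOpen hP.isClosed hU₁ fun x hx => (hK₁U hx.1).resolve_right hx.2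
  have huniv : μ univ = 1 :=
    hμ.eq_one_of_subset_isOpen hK₁.isClosed isOpen_univ (subset_univ _) hK₁1
  have hPc : μ (K₁ \ U₂)ᶜ = 1 := by
    have := hμ.1.1 _ _ disjoint_compl_right (.inl hP) (.inr hP.isClosed.isOpen_compl)
      (.inr (by simp))
    rwa [union_compl_self, huniv, hP0, zero_add, eq_comm] at this
  obtain ⟨K₂, hK₂P, hK₂, hK₂1⟩ :=
    hμ.exists_isCompact_subset_eq_one hP.isClosed.isOpen_compl hPc
  refine ⟨K₁, K₂, hK₁, hK₂, hK₁U, fun x hx => ?_, hK₁1, hK₂1⟩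
  by_contra hxU
  exact hK₂P hx.2 ⟨hx.1, hxU⟩

end SimpleTopMeasure

section AlmostSimple

variable {Z : Type*} [TopologicalSpace Z] {ρ : C_c(Z, ℝ) → ℝ}

def IsFullSet (ρ : C_c(Z, ℝ) → ℝ) (c : ℝ≥0∞) (K : Set Z) : Prop :=
  ∀ W, IsOpen W → K ⊆ W → qiMeas ρ W = c

theorem IsAlmostSimpleQI.exists_split [T2Space Z] (has : IsAlmostSimpleQI ρ)
    (hnm : ¬ IsSubadditiveOnOpens (qiMeas ρ)) :
    ∃ (c : ℝ≥0∞) (U₁ U₂ K₁ K₂ : Set Z), 0 < c ∧ c ≠ ∞ ∧ IsOpen U₁ ∧ IsOpen U₂ ∧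
      qiMeas ρ U₁ = 0 ∧ qiMeas ρ U₂ = 0 ∧ IsCompact K₁ ∧ IsCompact K₂ ∧
      K₁ ⊆ U₁ ∪ U₂ ∧ K₁ ∩ K₂ ⊆ U₂ ∧ IsFullSet ρ c K₁ ∧ IsFullSet ρ c K₂ := by
  obtain ⟨c, μ, hc0, hc, hμ, hρμ⟩ := has
  have hμnm : ¬ IsSubadditiveOnOpens μ := fun hsub => hnm fun U V hU hV => by
    rw [hρμ _ (.inl (hU.union hV)), hρμ _ (.inl hU), hρμ _ (.inl hV), ← mul_add]
    exact mul_le_mul_right (hsub U V hU hV) c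
  obtain ⟨U₁, U₂, hU₁, hU₂, hU₁0, hU₂0, hU1⟩ := hμ.exists_of_not_subadditive hμnm
  obtain ⟨K₁, K₂, hK₁, hK₂, hK₁U, hK₁₂, hK₁1, hK₂1⟩ :=
    hμ.exists_isCompact_inter_subset hU₁ hU₂ hU₁0 hU1
  have hfull : ∀ K, IsCompact K → μ K = 1 → IsFullSet ρ c K := fun K hK hK1 W hW hKW => by
    rw [hρμ W (.inl hW), hμ.eq_one_of_subset_isOpen hK.isClosed hW hKW hK1, mul_one]
  exact ⟨c, U₁, U₂, K₁, K₂, hc0, hc, hU₁, hU₂, by simp [hρμ _ (.inl hU₁), hU₁0],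
    by simp [hρμ _ (.inl hU₂), hU₂0], hK₁, hK₂, hK₁U, hK₁₂, hfull K₁ hK₁ hK₁1, hfull K₂ hK₂ hK₂1⟩

theorem IsQuasiIntegral.pos_of_isFullSet (hρ : IsQuasiIntegral ρ) {c : ℝ≥0∞} (hc0 : 0 < c)
    (hc : c ≠ ∞) {K : Set Z} (hK : IsFullSet ρ c K) {f : C_c(Z, ℝ)} (hf0 : ∀ x, 0 ≤ f x)
    {t : ℝ} (ht : 0 < t) (hfK : ∀ x ∈ K, t < f x) : 0 < ρ f := by
  have hW : IsOpen {x | t < f x} := isOpen_lt continuous_const f.continuous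
  have hlow := hρ.mul_toReal_qiMeas_le hW ht.le hf0 fun x hx => le_of_lt hx
  rw [hK _ hW hfK] at hlow
  exact (mul_pos ht (ENNReal.toReal_pos hc0.ne' hc)).trans_le hlow

end AlmostSimple

section Urysohn

variable {Z : Type*} [TopologicalSpace Z] [T2Space Z]

theorem exists_isOpen_superset_inter_subset {K₁ K₂ U : Set Z} (hK₁ : IsCompact K₁)
    (hK₂ : IsCompact K₂) (hU : IsOpen U) (h : K₁ ∩ K₂ ⊆ U) :
    ∃ N₁ N₂ : Set Z, IsOpen N₁ ∧ IsOpen N₂ ∧ K₁ ⊆ N₁ ∧ K₂ ⊆ N₂ ∧ N₁ ∩ N₂ ⊆ U := by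
  obtain ⟨D₁, D₂, hD₁, hD₂, hKD₁, hKD₂, hD⟩ :=
    SeparatedNhds.of_isCompact_isCompact (hK₁.diff hU) (hK₂.diff hU)
      (disjoint_left.2 fun x hx₁ hx₂ => hx₁.2 (h ⟨hx₁.1, hx₂.1⟩))
  refine ⟨U ∪ D₁, U ∪ D₂, hU.union hD₁, hU.union hD₂, sdiff_subset_iff.1 hKD₁,
    sdiff_subset_iff.1 hKD₂, ?_⟩
  rintro x ⟨hx₁ | hx₁, hx₂ | hx₂⟩
  exacts [hx₁, hx₁, hx₂, (disjoint_left.1 hD hx₁ hx₂).elim]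

variable [LocallyCompactSpace Z]

theorem exists_plateau {K N : Set Z} (hK : IsCompact K) (hN : IsOpen N) (hKN : K ⊆ N) :
    ∃ (Φ : C_c(Z, ℝ)) (A : Set Z), IsOpen A ∧ K ⊆ A ∧ EqOn Φ 1 A ∧
      (∀ x, Φ x ∈ Icc 0 1) ∧ tsupport Φ ⊆ N := by
  obtain ⟨C, hC, hKC, hCN⟩ := exists_compact_between hK hN hKN
  obtain ⟨f, hf1, hfc, hfN, hf01⟩ :=
    exists_continuousMap_one_of_isCompact_subset_isOpen hC hN hCN
  exact ⟨⟨f, hfc⟩, interior C, isOpen_interior, hKC, hf1.mono interior_subset, hf01, hfN⟩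

theorem exists_pair_sum_eq_one {L V₁ V₂ : Set Z} (hL : IsCompact L) (hV₁ : IsOpen V₁)
    (hV₂ : IsOpen V₂) (hLV : L ⊆ V₁ ∪ V₂) :
    ∃ h₁ h₂ : C_c(Z, ℝ), (∀ y, 0 ≤ h₁ y) ∧ (∀ y, 0 ≤ h₂ y) ∧ tsupport h₁ ⊆ V₁ ∧
      tsupport h₂ ⊆ V₂ ∧ ∀ y ∈ L, h₁ y + h₂ y = 1 := by
  obtain ⟨f, hfV, hf1, hf01, hfc⟩ := exists_continuous_sum_one_of_isOpen_isCompact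
    (s := ![V₁, V₂]) (fun i => by fin_cases i <;> assumption) hL
    (fun y hy => by simpa [Fin.exists_fin_two] using hLV hy)
  refine ⟨⟨f 0, hfc 0⟩, ⟨f 1, hfc 1⟩, fun y => (hf01 0 y).1, fun y => (hf01 1 y).1, hfV 0,
    hfV 1, fun y hy => ?_⟩
  simpa [Fin.sum_univ_two] using hf1 hy

end Urysohn

section Products

variable {X Y : Type*} [TopologicalSpace X] [TopologicalSpace Y]

theorem fiberY_add [T2Space X] (f g : C_c(X × Y, ℝ)) (y : Y) :
    fiberY (f + g) y = fiberY f y + fiberY g y := rfl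

theorem fiberY_tensor [T2Space X] (g : C_c(X, ℝ)) (h : C_c(Y, ℝ)) (y : Y) :
    fiberY (tensor g h) y = h y • g := by
  ext x
  exact mul_comm (g x) (h y)

theorem fiberX_add [T2Space Y] (f g : C_c(X × Y, ℝ)) (x : X) :
    fiberX (f + g) x = fiberX f x + fiberX g x := rfl

theorem fiberX_tensor [T2Space Y] (g : C_c(X, ℝ)) (h : C_c(Y, ℝ)) (x : X) :
    fiberX (tensor g h) x = g x • h := rfl

theorem prodQI_eq_of_Tmap_eq [T2Space X] {η : C_c(Y, ℝ) → ℝ} {ρ : C_c(X, ℝ) → ℝ}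
    {f : C_c(X × Y, ℝ)} {g : C_c(Y, ℝ)} (h : Tmap ρ f = g) : prodQI η ρ f = η g := by
  have hT : Continuous (Tmap ρ f) ∧ HasCompactSupport (Tmap ρ f) := by
    rw [h]
    exact ⟨g.continuous, g.hasCompactSupport⟩
  have : TCc ρ f = g := by
    rw [TCc, dif_pos hT]
    ext y
    exact congrFun h y
  exact congrArg η this

theorem IsQuasiIntegral.prodQI'_eq_zero [T2Space Y] {ρ : C_c(X, ℝ) → ℝ}
    (hρ : IsQuasiIntegral ρ) {η : C_c(Y, ℝ) → ℝ} {f : C_c(X × Y, ℝ)} {U : Set X}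
    (hU : IsOpen U) (hU0 : qiMeas ρ U = 0) (hS0 : ∀ x, 0 ≤ Smap η f x)
    (hS : tsupport (Smap η f) ⊆ U) : prodQI' ρ η f = 0 := by
  unfold prodQI' SCc
  split_ifs
  · exact hρ.eq_zero_of_tsupport_subset hU hU0 hS0 hS
  · exact hρ.map_zero

theorem IsQuasiIntegral.prodQI_add_tensor [T2Space X] {ρ : C_c(X, ℝ) → ℝ}
    (hρ : IsQuasiIntegral ρ) (η : C_c(Y, ℝ) → ℝ) (hfin : qiMeas ρ univ ≠ ∞) {U A₁ A₂ : Set X}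
    (hU : IsOpen U) (hU0 : qiMeas ρ U = 0) (hA₁ : IsOpen A₁) (hA₂ : IsOpen A₂)
    (hA₁univ : qiMeas ρ A₁ = qiMeas ρ univ) (hA₂univ : qiMeas ρ A₂ = qiMeas ρ univ)
    {Φ₁ Φ₂ : C_c(X, ℝ)} (hΦ₁ : ∀ x, Φ₁ x ∈ Icc 0 1) (hΦ₂ : ∀ x, Φ₂ x ∈ Icc 0 1)
    (hΦ₁A : EqOn Φ₁ 1 A₁) (hΦ₂A : EqOn Φ₂ 1 A₂) (hΦU : tsupport Φ₁ ∩ tsupport Φ₂ ⊆ U)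
    {h₁ h₂ : C_c(Y, ℝ)} (hh₁ : ∀ y, 0 ≤ h₁ y) (hh₂ : ∀ y, 0 ≤ h₂ y) :
    prodQI η ρ (tensor Φ₁ h₁ + tensor Φ₂ h₂) = η ((qiMeas ρ univ).toReal • (h₁ ⊔ h₂)) := by
  refine prodQI_eq_of_Tmap_eq (funext fun y => ?_)
  rw [Tmap, fiberY_add, fiberY_tensor, fiberY_tensor, hρ.map_smul_add_smul_eq_max hfin hU hU0
    hA₁ hA₂ hA₁univ hA₂univ hΦ₁ hΦ₂ hΦ₁A hΦ₂A hΦU (hh₁ y) (hh₂ y)]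
  simp [mul_comm]

/-- `η` kills each fibre `Φ₁ x • h₁ + Φ₂ x • h₂` unless both `Φ₁ x` and `Φ₂ x` are nonzero. -/
theorem IsQuasiIntegral.prodQI'_add_tensor_eq_zero [T2Space Y] {ρ : C_c(X, ℝ) → ℝ}
    {η : C_c(Y, ℝ) → ℝ} (hρ : IsQuasiIntegral ρ) (hη : IsQuasiIntegral η) {U : Set X}
    (hU : IsOpen U) (hU0 : qiMeas ρ U = 0) {V₁ V₂ : Set Y} (hV₁ : IsOpen V₁) (hV₂ : IsOpen V₂)
    (hV₁0 : qiMeas η V₁ = 0) (hV₂0 : qiMeas η V₂ = 0) {Φ₁ Φ₂ : C_c(X, ℝ)}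
    (hΦ₁ : ∀ x, 0 ≤ Φ₁ x) (hΦ₂ : ∀ x, 0 ≤ Φ₂ x) (hΦU : tsupport Φ₁ ∩ tsupport Φ₂ ⊆ U)
    {h₁ h₂ : C_c(Y, ℝ)} (hh₁ : ∀ y, 0 ≤ h₁ y) (hh₂ : ∀ y, 0 ≤ h₂ y) (hh₁V : tsupport h₁ ⊆ V₁)
    (hh₂V : tsupport h₂ ⊆ V₂) : prodQI' ρ η (tensor Φ₁ h₁ + tensor Φ₂ h₂) = 0 := by
  have hSmap : ∀ x, Smap η (tensor Φ₁ h₁ + tensor Φ₂ h₂) x = η (Φ₁ x • h₁ + Φ₂ x • h₂) :=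
    fun x => by rw [Smap, fiberX_add, fiberX_tensor, fiberX_tensor]
  refine hρ.prodQI'_eq_zero hU hU0 (fun x => ?_) ?_
  · rw [hSmap]
    exact hη.pos _ fun y => add_nonneg (mul_nonneg (hΦ₁ x) (hh₁ y)) (mul_nonneg (hΦ₂ x) (hh₂ y))
  refine (closure_mono fun x hx => ?_).trans ((closure_inter_subset_inter_closure _ _).trans hΦU)
  by_contra hΦ
  rw [mem_inter_iff, mem_support, mem_support, not_and_or, not_not, not_not] at hΦ
  rw [mem_support, hSmap] at hx
  rcases hΦ with h | h <;>
    simp [h, hη.smul, hη.eq_zero_of_tsupport_subset hV₁ hV₁0 hh₁ hh₁V,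
      hη.eq_zero_of_tsupport_subset hV₂ hV₂0 hh₂ hh₂V] at hx

end Products

theorem statement17_general {X Y : Type*}
    [TopologicalSpace X] [LocallyCompactSpace X] [T2Space X]
    [TopologicalSpace Y] [LocallyCompactSpace Y] [T2Space Y]
    (ρ : C_c(X, ℝ) → ℝ) (η : C_c(Y, ℝ) → ℝ)
    (hρ : IsQuasiIntegral ρ) (hη : IsQuasiIntegral η)
    (hρas : IsAlmostSimpleQI ρ) (hηas : IsAlmostSimpleQI η)
    (hρnm : ¬ IsSubadditiveOnOpens (qiMeas ρ)) (hηnm : ¬ IsSubadditiveOnOpens (qiMeas η)) :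
    prodQI η ρ ≠ prodQI' ρ η := by
  obtain ⟨c, -, U, K₁, K₂, hc0, hc, -, hU, -, hU0, hK₁, hK₂, -, hK₁₂, hfull₁, hfull₂⟩ :=
    hρas.exists_split hρnm
  obtain ⟨d, V₁, V₂, L, -, hd0, hd, hV₁, hV₂, hV₁0, hV₂0, hL, -, hLV, -, hfullL, -⟩ :=
    hηas.exists_split hηnm
  have huniv : qiMeas ρ univ = c := hfull₁ univ isOpen_univ (subset_univ _)
  obtain ⟨N₁, N₂, hN₁, hN₂, hKN₁, hKN₂, hN⟩ :=
    exists_isOpen_superset_inter_subset hK₁ hK₂ hU hK₁₂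
  obtain ⟨Φ₁, A₁, hA₁, hKA₁, hΦ₁A, hΦ₁, hΦ₁N⟩ := exists_plateau hK₁ hN₁ hKN₁
  obtain ⟨Φ₂, A₂, hA₂, hKA₂, hΦ₂A, hΦ₂, hΦ₂N⟩ := exists_plateau hK₂ hN₂ hKN₂
  obtain ⟨h₁, h₂, hh₁, hh₂, hh₁V, hh₂V, hhL⟩ := exists_pair_sum_eq_one hL hV₁ hV₂ hLV
  have hΦU : tsupport Φ₁ ∩ tsupport Φ₂ ⊆ U := (inter_subset_inter hΦ₁N hΦ₂N).trans hN
  have hT := hρ.prodQI_add_tensor η (huniv ▸ hc) hU hU0 hA₁ hA₂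
    (by rw [huniv, hfull₁ A₁ hA₁ hKA₁]) (by rw [huniv, hfull₂ A₂ hA₂ hKA₂]) hΦ₁ hΦ₂ hΦ₁A hΦ₂A hΦU
    hh₁ hh₂
  have hS := hρ.prodQI'_add_tensor_eq_zero hη hU hU0 hV₁ hV₂ hV₁0 hV₂0 (fun x => (hΦ₁ x).1)
    (fun x => (hΦ₂ x).1) hΦU hh₁ hh₂ hh₁V hh₂V
  have hpos : 0 < η (h₁ ⊔ h₂) := hη.pos_of_isFullSet hd0 hd hfullL
    (fun y => le_sup_of_le_left (hh₁ y)) (by norm_num : (0 : ℝ) < 1 / 3) fun y hy => by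
      simp only [sup_apply]
      linarith [hhL y hy, le_max_left (h₁ y) (h₂ y), le_max_right (h₁ y) (h₂ y)]
  intro h
  rw [← h, hT, hη.smul, huniv] at hS
  exact (mul_pos (ENNReal.toReal_pos hc0.ne' hc) hpos).ne' hS

theorem statement17 {X Y : Type*}
    [TopologicalSpace X] [LocallyCompactSpace X] [T2Space X] [ConnectedSpace X]
    [TopologicalSpace Y] [LocallyCompactSpace Y] [T2Space Y] [ConnectedSpace Y]
    (ρ : C_c(X, ℝ) → ℝ) (η : C_c(Y, ℝ) → ℝ)
    (hρ : IsQuasiIntegral ρ) (hη : IsQuasiIntegral η)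
    (hρas : IsAlmostSimpleQI ρ) (hηas : IsAlmostSimpleQI η)
    (hρnm : ¬ IsSubadditiveOnOpens (qiMeas ρ)) (hηnm : ¬ IsSubadditiveOnOpens (qiMeas η)) :
    prodQI η ρ ≠ prodQI' ρ η :=
  statement17_general ρ η hρ hη hρas hηas hρnm hηnm

end QLF
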